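/- Let β ≥ γ ≥ 0 with β + γ > 1 and β < 1. Then there is a constant C (depending only on β, γ) such that for all a₁, a₂ ∈ ℝ, ∫_ℝ dx / (⟨x - a₁⟩^β ⟨x - a₂⟩^γ) ≤ C ⟨a₁ - a₂⟩^{1 - β - γ}. -/

import Mathlib

open MeasureTheory

noncomputable def jb (x : ℝ) : ℝ := Real.sqrt (1 + x ^ 2)

open Set Real

/-!
Split the line according to which of `u = x - a₂`, `v = x - a₁` is larger in absolute value.
Where `|u| ≤ |v|`, the triangle inequality gives `⟨v⟩ ≥ max ⟨u⟩ (⟨a₁ - a₂⟩ / 2)`, so the integrand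
is at most `⟨u⟩^(-γ) max ⟨u⟩ S ^ (-β)` with `S = ⟨a₁ - a₂⟩ / 2`, and symmetrically on the other
part. Each of these one-variable profiles integrates to `O(S ^ (1 - β - γ))`: up to `|y| = S` it is
at most `S^(-q) |y|^(-p)` with `p < 1`, beyond it at most `|y|^(-(p + q))` with `p + q > 1`.
-/

lemma jb_pos (x : ℝ) : 0 < jb x := Real.sqrt_pos.2 (by positivity)

lemma jb_abs (x : ℝ) : jb |x| = jb x := by rw [jb, jb, sq_abs]

lemma jb_sub_comm (x y : ℝ) : jb (x - y) = jb (y - x) := by rw [← jb_abs, abs_sub_comm, jb_abs]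

lemma abs_le_jb (x : ℝ) : |x| ≤ jb x := Real.abs_le_sqrt (by linarith)

lemma jb_le_jb_of_abs_le {x y : ℝ} (h : |x| ≤ |y|) : jb x ≤ jb y :=
  Real.sqrt_le_sqrt (by nlinarith [sq_abs x, sq_abs y, abs_nonneg x])

lemma jb_two_mul_le (x : ℝ) : jb (2 * x) ≤ 2 * jb x := by
  rw [show 2 * jb x = √(2 ^ 2 * (1 + x ^ 2)) by
    rw [Real.sqrt_mul (by positivity), Real.sqrt_sq zero_le_two, jb]]
  exact Real.sqrt_le_sqrt (by nlinarith)

lemma jb_rpow_eq_one_add_norm_sq_rpow (x r : ℝ) : jb x ^ r = (1 + ‖x‖ ^ 2) ^ (r / 2) := by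
  rw [jb, Real.sqrt_eq_rpow, ← Real.rpow_mul (by positivity), norm_eq_abs, sq_abs]
  ring_nf

lemma max_jb_le_of_abs_le {u v : ℝ} (h : |u| ≤ |v|) : max (jb u) (jb (u - v) / 2) ≤ jb v := by
  refine max_le (jb_le_jb_of_abs_le h) ?_
  have : |u - v| ≤ |2 * v| := by rw [abs_mul, abs_two]; linarith [abs_sub u v]
  linarith [jb_le_jb_of_abs_le this, jb_two_mul_le v]

lemma jb_rpow_neg_mul_le {β γ : ℝ} (hβ : 0 ≤ β) (hγ : 0 ≤ γ) (u v : ℝ) :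
    jb v ^ (-β) * jb u ^ (-γ) ≤
      jb u ^ (-γ) * max (jb u) (jb (u - v) / 2) ^ (-β) +
        jb v ^ (-β) * max (jb v) (jb (u - v) / 2) ^ (-γ) := by
  have := jb_pos u
  have := jb_pos v
  rcases le_total |u| |v| with h | h
  · refine le_add_of_le_of_nonneg ?_ (by positivity)
    rw [mul_comm]
    exact mul_le_mul_of_nonneg_left (rpow_le_rpow_of_nonpos ((jb_pos u).trans_le (le_max_left _ _))
      (max_jb_le_of_abs_le h) (neg_nonpos.2 hβ)) (by positivity)
  · refine le_add_of_nonneg_of_le (by positivity) ?_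
    rw [jb_sub_comm]
    exact mul_le_mul_of_nonneg_left (rpow_le_rpow_of_nonpos ((jb_pos v).trans_le (le_max_left _ _))
      (max_jb_le_of_abs_le h) (neg_nonpos.2 hγ)) (by positivity)

lemma integrable_jb_rpow_neg_mul_max {p q : ℝ} (S : ℝ) (hq : 0 ≤ q) (hpq : 1 < p + q) :
    Integrable (fun y => jb y ^ (-p) * max (jb y) S ^ (-q)) := by
  have hcont : Continuous jb := by unfold jb; fun_prop
  refine (integrable_rpow_neg_one_add_norm_sq (E := ℝ) (r := p + q) (by simpa using hpq)).mono'
    ((hcont.rpow_const fun y => Or.inl (jb_pos y).ne').mul ((hcont.max continuous_const).rpow_const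
      fun y => Or.inl ((jb_pos y).trans_le (le_max_left _ _)).ne')).aestronglyMeasurable
    (Filter.Eventually.of_forall fun y => ?_)
  have := jb_pos y
  rw [Real.norm_of_nonneg (by positivity), ← jb_rpow_eq_one_add_norm_sq_rpow, neg_add,
    rpow_add this]
  exact mul_le_mul_of_nonneg_left
    (rpow_le_rpow_of_nonpos this (le_max_left _ _) (neg_nonpos.2 hq)) (by positivity)

lemma integral_jb_rpow_neg_mul_max_le {p q S : ℝ} (hp₀ : 0 ≤ p) (hp : p < 1) (hq : 0 ≤ q)
    (hpq : 1 < p + q) (hS : 0 < S) :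
    ∫ y, jb y ^ (-p) * max (jb y) S ^ (-q) ≤
      2 * (1 / (1 - p) + 1 / (p + q - 1)) * S ^ (1 - p - q) := by
  set f := fun y => jb y ^ (-p) * max (jb y) S ^ (-q) with hf
  have hint : Integrable f := integrable_jb_rpow_neg_mul_max S hq hpq
  have hjb_rpow_le {y : ℝ} (hy : 0 < y) (r : ℝ) (hr : 0 ≤ r) : jb y ^ (-r) ≤ y ^ (-r) :=
    rpow_le_rpow_of_nonpos hy ((le_abs_self y).trans (abs_le_jb y)) (neg_nonpos.2 hr)
  have hnear : ∫ y in Ioc 0 S, f y ≤ S ^ (1 - p - q) / (1 - p) := by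
    calc ∫ y in Ioc 0 S, f y ≤ ∫ y in Ioc 0 S, S ^ (-q) * y ^ (-p) := by
          refine setIntegral_mono_on hint.integrableOn ?_ measurableSet_Ioc fun y hy => ?_
          · exact (intervalIntegral.intervalIntegrable_rpow' (a := 0) (b := S)
              (by linarith)).1.const_mul _
          · rw [mul_comm]
            exact mul_le_mul (hjb_rpow_le hy.1 p hp₀)
              (rpow_le_rpow_of_nonpos hS (le_max_right _ _) (neg_nonpos.2 hq))
              (rpow_nonneg ((jb_pos y).le.trans (le_max_left _ _)) _) (rpow_nonneg hy.1.le _)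
      _ = S ^ (1 - p - q) / (1 - p) := by
          rw [integral_const_mul, ← intervalIntegral.integral_of_le hS.le,
            integral_rpow (Or.inl (by linarith)), zero_rpow (by linarith), sub_zero,
            mul_div_assoc', ← rpow_add hS]
          ring_nf
  have hfar : ∫ y in Ioi S, f y ≤ S ^ (1 - p - q) / (p + q - 1) := by
    calc ∫ y in Ioi S, f y ≤ ∫ y in Ioi S, y ^ (-(p + q)) := by
          refine setIntegral_mono_on hint.integrableOn
            (integrableOn_Ioi_rpow_of_lt (by linarith) hS) measurableSet_Ioi fun y hy => ?_
          have hjb : max (jb y) S = jb y :=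
            max_eq_left (hy.le.trans ((le_abs_self y).trans (abs_le_jb y)))
          simp only [hf]
          rw [hjb, ← rpow_add (jb_pos y), ← neg_add]
          exact hjb_rpow_le (hS.trans hy) _ (by linarith)
      _ = S ^ (1 - p - q) / (p + q - 1) := by
          rw [integral_Ioi_rpow_of_lt (by linarith) hS, neg_div, ← div_neg]
          ring_nf
  have heven : ∫ y, f y = 2 * ∫ y in Ioi 0, f y := by
    simp only [← integral_comp_abs, hf, jb_abs]
  rw [heven, ← Ioc_union_Ioi_eq_Ioi hS.le, setIntegral_union (Ioc_disjoint_Ioi le_rfl)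
    measurableSet_Ioi hint.integrableOn hint.integrableOn]
  calc 2 * ((∫ y in Ioc 0 S, f y) + ∫ y in Ioi S, f y)
      ≤ 2 * (S ^ (1 - p - q) / (1 - p) + S ^ (1 - p - q) / (p + q - 1)) := by gcongr
    _ = 2 * (1 / (1 - p) + 1 / (p + q - 1)) * S ^ (1 - p - q) := by ring

theorem stmt_2 (β γ : ℝ) (hγ : 0 ≤ γ) (hβγ : γ ≤ β) (hsum : 1 < β + γ) (hβ : β < 1) :
    ∃ C : ℝ, ∀ a₁ a₂ : ℝ,
      ∫ x : ℝ, 1 / (jb (x - a₁) ^ β * jb (x - a₂) ^ γ) ≤ C * jb (a₁ - a₂) ^ (1 - β - γ) := by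
  have hβ₀ : 0 ≤ β := hγ.trans hβγ
  have hγ₁ : γ < 1 := hβγ.trans_lt hβ
  refine ⟨(2 * (1 / (1 - γ) + 1 / (β + γ - 1)) + 2 * (1 / (1 - β) + 1 / (β + γ - 1))) /
    2 ^ (1 - β - γ), fun a₁ a₂ => ?_⟩
  set S := jb (a₁ - a₂) / 2 with hS_def
  have hS : 0 < S := half_pos (jb_pos _)
  set g₁ := fun y => jb y ^ (-γ) * max (jb y) S ^ (-β)
  set g₂ := fun y => jb y ^ (-β) * max (jb y) S ^ (-γ)
  have hg₁ : ∫ y, g₁ y ≤ 2 * (1 / (1 - γ) + 1 / (β + γ - 1)) * S ^ (1 - β - γ) := by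
    rw [show 1 - β - γ = 1 - γ - β by ring, add_comm β]
    exact integral_jb_rpow_neg_mul_max_le hγ hγ₁ hβ₀ (by linarith) hS
  have hg₂ : ∫ y, g₂ y ≤ 2 * (1 / (1 - β) + 1 / (β + γ - 1)) * S ^ (1 - β - γ) :=
    integral_jb_rpow_neg_mul_max_le hβ₀ hβ hγ hsum hS
  have hint₁ : Integrable g₁ := integrable_jb_rpow_neg_mul_max S hβ₀ (by linarith)
  have hint₂ : Integrable g₂ := integrable_jb_rpow_neg_mul_max S hγ hsum
  have hpointwise (x : ℝ) :
      1 / (jb (x - a₁) ^ β * jb (x - a₂) ^ γ) ≤ g₁ (x - a₂) + g₂ (x - a₁) := by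
    have := jb_rpow_neg_mul_le hβ₀ hγ (x - a₂) (x - a₁)
    rw [sub_sub_sub_cancel_left] at this
    rwa [one_div, mul_inv, ← rpow_neg (jb_pos _).le, ← rpow_neg (jb_pos _).le]
  calc ∫ x, 1 / (jb (x - a₁) ^ β * jb (x - a₂) ^ γ)
      ≤ ∫ x, (g₁ (x - a₂) + g₂ (x - a₁)) :=
        integral_mono_of_nonneg (Filter.Eventually.of_forall fun x => by
          have := jb_pos (x - a₁); have := jb_pos (x - a₂); positivity)
          ((hint₁.comp_sub_right a₂).add (hint₂.comp_sub_right a₁))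
          (Filter.Eventually.of_forall hpointwise)
    _ = (∫ y, g₁ y) + ∫ y, g₂ y := by
        rw [integral_add (hint₁.comp_sub_right a₂) (hint₂.comp_sub_right a₁),
          integral_sub_right_eq_self, integral_sub_right_eq_self]
    _ ≤ _ := add_le_add hg₁ hg₂
    _ = _ := by rw [hS_def, div_rpow (jb_pos _).le zero_le_two]; ring
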